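/- Consider a deterministic finite-horizon decision process of horizon H with reward function r bounded in [0,1] per step. Let τ*(x) = (s_1(x),a_1(x),...,s_H(x),a_H(x)) be a reference trajectory for context x, and let τ_π(x) be the deterministic trajectory generated by a deterministic policy π from initial state s_1(x) = x. Then r(τ*(x)) − r(τ_π(x)) ≤ ∑_{h=1}^H (H−h+1)·𝟙(π(s_h(x)) ≠ a_h(x)). -/
import Mathlib


/-- Trajectory-difference lemma: in a deterministic finite-horizon decision process with
per-step rewards in `[0,1]`, the return of a reference trajectory `(s_h, a_h)_{h=1}^H`
exceeds the return of the trajectory of a deterministic policy `π` from the same initial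
state by at most `∑_{h=1}^H (H − h + 1)·𝟙(π(s_h) ≠ a_h)`. -/
theorem stmt_3 {S A : Type*} [DecidableEq A] (H : ℕ)
    (P : S → A → S) (rew : S → A → ℝ)
    (hrew : ∀ s a, rew s a ∈ Set.Icc (0:ℝ) 1)
    (x : S) (π : S → A)
    (s : ℕ → S) (a : ℕ → A) (t : ℕ → S)
    (hs1 : s 1 = x) (hstep : ∀ h, 1 ≤ h → h < H → s (h + 1) = P (s h) (a h))
    (ht1 : t 1 = x) (htstep : ∀ h, 1 ≤ h → h < H → t (h + 1) = P (t h) (π (t h))) :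
    (∑ h ∈ Finset.Icc 1 H, rew (s h) (a h)) -
      (∑ h ∈ Finset.Icc 1 H, rew (t h) (π (t h)))
    ≤ ∑ h ∈ Finset.Icc 1 H, ((H : ℝ) - h + 1) * (if π (s h) ≠ a h then 1 else 0) := by
  classical
  have hRHSnonneg : ∀ h ∈ Finset.Icc 1 H,
      (0:ℝ) ≤ ((H : ℝ) - h + 1) * (if π (s h) ≠ a h then 1 else 0) := by
    intro h hh
    rw [Finset.mem_Icc] at hh
    have : (h:ℝ) ≤ H := by exact_mod_cast hh.2
    have h1 : (0:ℝ) ≤ (H:ℝ) - h + 1 := by linarith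
    positivity
  -- agreement prefix lemma
  have key : ∀ m, (∀ k, 1 ≤ k → k < m → π (s k) = a k) →
      ∀ h, 1 ≤ h → h ≤ m → h ≤ H → t h = s h := by
    intro m hag h
    induction h with
    | zero => intro h1 _ _; omega
    | succ n ih =>
      intro _ hle hleH
      rcases Nat.eq_zero_or_pos n with hn | hn
      · subst hn; rw [ht1, hs1]
      · have hnH : n < H := by omega
        have htn : t n = s n := ih hn (by omega) (by omega)
        have hpi : π (s n) = a n := hag n hn (by omega)
        rw [htstep n hn hnH, htn, hpi, ← hstep n hn hnH]
  by_cases hD : ∃ h ∈ Finset.Icc 1 H, π (s h) ≠ a h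
  · set D := (Finset.Icc 1 H).filter (fun h => π (s h) ≠ a h) with hDdef
    have hDne : D.Nonempty := by
      obtain ⟨h, hh, hne⟩ := hD
      exact ⟨h, Finset.mem_filter.mpr ⟨hh, hne⟩⟩
    set h0 := D.min' hDne with hh0
    have hh0D : h0 ∈ D := D.min'_mem hDne
    have hh0mem : h0 ∈ Finset.Icc 1 H := (Finset.mem_filter.mp hh0D).1
    have hh0ne : π (s h0) ≠ a h0 := (Finset.mem_filter.mp hh0D).2
    obtain ⟨h01, h0H⟩ := Finset.mem_Icc.mp hh0mem
    have hagree : ∀ k, 1 ≤ k → k < h0 → π (s k) = a k := by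
      intro k hk1 hkh0
      by_contra hne
      have : k ∈ D := Finset.mem_filter.mpr ⟨Finset.mem_Icc.mpr ⟨hk1, by omega⟩, hne⟩
      exact absurd (D.min'_le k this) (by omega)
    have hteq : ∀ h, 1 ≤ h → h ≤ h0 → t h = s h := fun h h1 h2 =>
      key h0 hagree h h1 h2 (by omega)
    have step1 : (∑ h ∈ Finset.Icc 1 H, rew (s h) (a h)) -
        (∑ h ∈ Finset.Icc 1 H, rew (t h) (π (t h))) ≤ (H:ℝ) - h0 + 1 := by
      rw [← Finset.sum_sub_distrib]
      have hle : ∑ h ∈ Finset.Icc 1 H, (rew (s h) (a h) - rew (t h) (π (t h)))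
          ≤ ∑ h ∈ Finset.Icc 1 H, (if h < h0 then (0:ℝ) else 1) := by
        apply Finset.sum_le_sum
        intro h hh
        obtain ⟨hh1, hhH⟩ := Finset.mem_Icc.mp hh
        by_cases hc : h < h0
        · rw [if_pos hc, hteq h hh1 (by omega), hagree h hh1 hc]
          simp
        · rw [if_neg hc]
          have h1 := (hrew (s h) (a h)).2
          have h2 := (hrew (t h) (π (t h))).1
          linarith
      have hcount : ∑ h ∈ Finset.Icc 1 H, (if h < h0 then (0:ℝ) else 1)
          = (H:ℝ) - h0 + 1 := by
        have heq : ∀ h, (if h < h0 then (0:ℝ) else 1) = (if ¬ h < h0 then (1:ℝ) else 0) := by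
          intro h; by_cases hc : h < h0 <;> simp [hc]
        rw [Finset.sum_congr rfl (fun h _ => heq h), Finset.sum_boole]
        have : (Finset.Icc 1 H).filter (fun h => ¬ h < h0) = Finset.Icc h0 H := by
          ext k; simp only [Finset.mem_filter, Finset.mem_Icc, not_lt]; omega
        rw [this, Nat.card_Icc]
        have : (H + 1 - h0 : ℕ) = ((H + 1 - h0 : ℕ) : ℝ) := rfl
        push_cast [Nat.cast_sub (by omega : h0 ≤ H + 1)]
        ring
      linarith
    have step2 : (H:ℝ) - h0 + 1 ≤
        ∑ h ∈ Finset.Icc 1 H, ((H : ℝ) - h + 1) * (if π (s h) ≠ a h then 1 else 0) := by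
      have := Finset.single_le_sum hRHSnonneg hh0mem
      rwa [if_pos hh0ne, mul_one] at this
    linarith
  · push_neg at hD
    have hteq : ∀ h ∈ Finset.Icc 1 H, rew (t h) (π (t h)) = rew (s h) (a h) := by
      intro h hh
      obtain ⟨hh1, hhH⟩ := Finset.mem_Icc.mp hh
      have : t h = s h := key (H + 1)
        (fun k hk1 hk => hD k (Finset.mem_Icc.mpr ⟨hk1, by omega⟩)) h hh1 (by omega) hhH
      rw [this, hD h hh]
    rw [Finset.sum_congr rfl hteq, sub_self]
    exact Finset.sum_nonneg hRHSnonneg
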